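/- (Frostman shift of a weighted model space) Let θ be an inner function, α ∈ ℂ with |α| < 1, and set θ_α(z) = (α − θ(z))/(1 − ᾱθ(z)) and g_α(z) = (1 − ᾱθ(z))/√(1 − |α|²). If p is an isometric multiplier on K_θ, then θ_α is an inner function, p·g_α is an isometric multiplier on K_{θ_α}, and pK_θ = (p·g_α)K_{θ_α}. -/

import Mathlib

open MeasureTheory Complex Filter

noncomputable section

namespace HankelSchmidt

instance fact_two_pi_pos : Fact (0 < 2 * Real.pi) := ⟨Real.two_pi_pos⟩

/-- The circle `𝕋`, realized as `ℝ / 2πℤ`. -/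
abbrev Tc : Type := AddCircle (2 * Real.pi)

/-- Normalized arc-length (Haar) measure on the circle. -/
abbrev muc : Measure Tc := AddCircle.haarAddCircle

/-- The space `L²(𝕋)`. -/
abbrev Ltwo := Lp ℂ 2 muc

/-- The Hardy space `H²`: the subspace of `L²(𝕋)` of functions whose Fourier coefficients
of negative index vanish. -/
def Hardy : Submodule ℂ Ltwo where
  carrier := {f | ∀ n : ℤ, n < 0 → fourierBasis.repr f n = 0}
  add_mem' := by
    intro a b ha hb n hn
    simp [map_add, lp.coeFn_add, ha n hn, hb n hn]
  zero_mem' := by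
    intro n hn
    simp
  smul_mem' := by
    intro c a ha n hn
    simp [_root_.map_smul, lp.coeFn_smul, ha n hn]

theorem hardy_isClosed : IsClosed (Hardy : Set Ltwo) := by
  have hset : (Hardy : Set Ltwo) =
      ⋂ (n : ℤ) (_ : n < 0), {f : Ltwo | fourierBasis.repr f n = 0} := by
    ext f
    simp only [Set.mem_iInter, Set.mem_setOf_eq]
    rfl
  rw [hset]
  refine isClosed_iInter fun n => isClosed_iInter fun hn => ?_
  have hcont : Continuous fun f : Ltwo => fourierBasis.repr f n := by
    have h1 : Continuous fun g : lp (fun _ : ℤ => ℂ) 2 => g n :=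
      (continuous_apply n).comp lp.uniformContinuous_coe.continuous
    exact h1.comp fourierBasis.repr.continuous
  exact isClosed_eq hcont continuous_const

instance : CompleteSpace (Hardy : Submodule ℂ Ltwo) := hardy_isClosed.completeSpace_coe

/-- The Hardy space as a type. -/
abbrev Hd := (Hardy : Submodule ℂ Ltwo)

/-- The orthogonal projection `P : L²(𝕋) → H²`. -/
def P2 : Ltwo → Hd := fun f => Submodule.orthogonalProjectionOnto Hardy f

/-- The orthogonal projection `P`, viewed as a map `L²(𝕋) → L²(𝕋)` with range `H²`. -/
def PL : Ltwo → Ltwo := fun f => ((P2 f : Hd) : Ltwo)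

theorem fourierCoeff_congr_ae {f g : Tc → ℂ} (h : f =ᵐ[muc] g) (n : ℤ) :
    fourierCoeff f n = fourierCoeff g n :=
  integral_congr_ae (h.mono fun x hx => by dsimp only; rw [hx])

theorem mem_Hardy_iff {f : Ltwo} :
    f ∈ Hardy ↔ ∀ n : ℤ, n < 0 → fourierCoeff (f : Tc → ℂ) n = 0 := by
  constructor
  · intro hf n hn; rw [← fourierBasis_repr]; exact hf n hn
  · intro hf n hn; rw [fourierBasis_repr]; exact hf n hn

/-- Pointwise multiplication by a bounded measurable function preserves `L²`. -/
theorem memLp_mul_of_bounded {g : Tc → ℂ} (hg : AEStronglyMeasurable g muc) {C : ℝ}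
    (hb : ∀ᵐ x ∂muc, ‖g x‖ ≤ C) (f : Ltwo) :
    MemLp (fun x => g x * (f : Tc → ℂ) x) 2 muc := by
  refine MemLp.of_le_mul (c := C) (Lp.memLp f) (hg.mul (Lp.aestronglyMeasurable f)) ?_
  filter_upwards [hb] with x hx
  rw [norm_mul]
  exact mul_le_mul_of_nonneg_right hx (norm_nonneg _)

theorem fourier_abs (n : ℤ) (x : Tc) : ‖fourier n x‖ = 1 := by
  rw [fourier_apply]; exact Circle.norm_coe _

theorem fourier_norm_one (n : ℤ) (x : Tc) : ‖fourier n x‖ ≤ 1 :=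
  le_of_eq (fourier_abs n x)

/-- Multiplication of an `L²` function by the monomial `z^n`. -/
def mulF (n : ℤ) (f : Ltwo) : Ltwo :=
  (memLp_mul_of_bounded ((map_continuous (fourier n)).aestronglyMeasurable)
    (Eventually.of_forall (fourier_norm_one n)) f).toLp _

theorem mulF_coe (n : ℤ) (f : Ltwo) :
    (mulF n f : Tc → ℂ) =ᵐ[muc] fun x => fourier n x * (f : Tc → ℂ) x :=
  MemLp.coeFn_toLp _

theorem fourierCoeff_fourier_mul (f : Tc → ℂ) (m n : ℤ) :
    fourierCoeff (fun x => fourier m x * f x) n = fourierCoeff f (n - m) := by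
  unfold fourierCoeff
  refine integral_congr_ae (Eventually.of_forall fun x => ?_)
  have h : @fourier (2 * Real.pi) (-(n - m)) x = fourier (-n) x * fourier m x := by
    rw [show -(n - m) = -n + m by ring, fourier_add]
  simp only [smul_eq_mul, h]
  ring

/-- The shift operator `S : H² → H²`, `(Sf)(z) = z·f(z)`. -/
def Sop (f : Hd) : Hd :=
  ⟨mulF 1 (f : Ltwo), by
    rw [mem_Hardy_iff]
    intro n hn
    rw [fourierCoeff_congr_ae (mulF_coe 1 (f : Ltwo)) n, fourierCoeff_fourier_mul]
    exact (mem_Hardy_iff.mp f.2) (n - 1) (by omega)⟩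

/-- The adjoint shift `S* : H² → H²`, `S*f = P(z̄·f)`. -/
def SstarOp (f : Hd) : Hd := P2 (mulF (-1) (f : Ltwo))

/-- The constant function `𝟙 ∈ H²`. -/
def oneH : Hd :=
  ⟨fourierLp 2 0, by
    rw [mem_Hardy_iff]
    intro n hn
    rw [← fourierBasis_repr]
    have h1 : (fourierLp (T := 2 * Real.pi) 2 0) = fourierBasis 0 := by
      rw [coe_fourierBasis]
    rw [h1, HilbertBasis.repr_self, lp.single_apply]
    simp [Pi.single_apply]
    omega⟩

/-- The inner product on `H²`, linear in the FIRST argument (the paper's convention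
`⟨f, g⟩ = ∫ f ḡ`). -/
def ipH (f g : Hd) : ℂ := @inner ℂ Ltwo _ (g : Ltwo) (f : Ltwo)

/-- The inner product on `L²(𝕋)`, linear in the FIRST argument. -/
def ipL (f g : Ltwo) : ℂ := @inner ℂ Ltwo _ g f

/-- `θ ∈ H²` is an inner function if `|θ(z)| = 1` a.e. on `𝕋`. -/
def IsInnerFn (θ : Hd) : Prop := ∀ᵐ x ∂muc, ‖((θ : Ltwo) : Tc → ℂ) x‖ = 1

/-- The set `θ·H² ⊆ L²(𝕋)` of pointwise a.e. products `θ·f`, `f ∈ H²`. -/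
def thetaHardy (θ : Hd) : Set Ltwo :=
  {g : Ltwo | ∃ f : Hd, (g : Tc → ℂ) =ᵐ[muc]
    fun x => ((θ : Ltwo) : Tc → ℂ) x * ((f : Ltwo) : Tc → ℂ) x}

/-- The model space `K_θ = H² ∩ (θH²)^⊥`, as a subset of `L²(𝕋)`. -/
def KspaceL (θ : Hd) : Set Ltwo :=
  {h : Ltwo | h ∈ Hardy ∧ ∀ g ∈ thetaHardy θ, ipL h g = 0}

/-- The model space `K_θ`, as a subset of `H²`. -/
def Kspace (θ : Hd) : Set Hd := {h : Hd | (h : Ltwo) ∈ KspaceL θ}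

/-- `p` is an isometric multiplier on `K_θ`: `p` is measurable and, for every `h ∈ K_θ`,
the pointwise product `p·h` lies in `H²` and has the same norm as `h`. -/
def IsIsomMult (p : Tc → ℂ) (θ : Hd) : Prop :=
  Measurable p ∧ ∀ h ∈ Kspace θ, ∃ g : Hd,
    ((g : Ltwo) : Tc → ℂ) =ᵐ[muc] (fun x => p x * ((h : Ltwo) : Tc → ℂ) x) ∧
    ‖(g : Ltwo)‖ = ‖(h : Ltwo)‖

/-- The subspace `p·K_θ = {p·h : h ∈ K_θ}` of `H²`. -/
def wModel (p : Tc → ℂ) (θ : Hd) : Set Hd :=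
  {g : Hd | ∃ h ∈ Kspace θ, ((g : Ltwo) : Tc → ℂ) =ᵐ[muc]
    fun x => p x * ((h : Ltwo) : Tc → ℂ) x}

/-- A bounded Hankel operator on `H²`: a continuous antilinear map `H : H² → H²`
satisfying `S*H = HS`. -/
def IsHankelOp (H : Hd →L⋆[ℂ] Hd) : Prop := ∀ f : Hd, SstarOp (H f) = H (Sop f)

/-- A bounded measurable symbol on the circle (an `L^∞` function). -/
def IsBddFn (u : Tc → ℂ) : Prop := Measurable u ∧ ∃ C : ℝ, ∀ᵐ x ∂muc, ‖u x‖ ≤ C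

theorem memLp_mul_conj {u : Tc → ℂ} (hu : IsBddFn u) (f : Ltwo) :
    MemLp (fun x => u x * (starRingEnd ℂ) ((f : Tc → ℂ) x)) 2 muc := by
  obtain ⟨hmeas, C, hC⟩ := hu
  refine MemLp.of_le_mul (c := C) (Lp.memLp f)
    (hmeas.aestronglyMeasurable.mul
      (continuous_star.comp_aestronglyMeasurable (Lp.aestronglyMeasurable f))) ?_
  filter_upwards [hC] with x hx
  rw [norm_mul, RCLike.norm_conj]
  exact mul_le_mul_of_nonneg_right hx (norm_nonneg _)

/-- The Hankel operator with symbol `u`: `H_u f = P(u·f̄)`, defined on all of `L²(𝕋)`. -/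
def hankelL (u : Tc → ℂ) (hu : IsBddFn u) : Ltwo → Ltwo :=
  fun f => PL ((memLp_mul_conj hu f).toLp _)

/-- The Möbius transformation `μ(z) = (α − z)/(1 − ᾱz)` of the unit disk. -/
def mobius (α z : ℂ) : ℂ := (α - z) / (1 - (starRingEnd ℂ) α * z)

/-- The point `e^{ix} ∈ ℂ` corresponding to `x ∈ 𝕋`. -/
def circlePt (x : Tc) : ℂ := fourier 1 x

/-- The Möbius transformation `μ` viewed as a self-map of `𝕋`. -/
def mobiusT (α : ℂ) (x : Tc) : Tc := ((Complex.arg (mobius α (circlePt x)) : ℝ) : Tc)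

/-- The weight `√(1 − |α|²)/(1 − ᾱz)` in the definition of `U_μ`. -/
def umuWeight (α : ℂ) (x : Tc) : ℂ :=
  (Real.sqrt (1 - ‖α‖ ^ 2) : ℂ) / (1 - (starRingEnd ℂ) α * circlePt x)

/-- `U` is the operator `U_μ`: `(U_μ f)(z) = (√(1 − |α|²)/(1 − ᾱz))·f(μ(z))` a.e. -/
def IsUmu (α : ℂ) (U : Ltwo → Ltwo) : Prop :=
  ∀ f : Ltwo, ((U f : Ltwo) : Tc → ℂ) =ᵐ[muc]
    fun x => umuWeight α x * (f : Tc → ℂ) (mobiusT α x)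


/-!
The Crofoot transform `f ↦ √(1 - |α|²) f / (1 - ᾱθ)` maps `K_θ` isometrically into `K_{θ_α}`.
The multiplier `(1 - ᾱθ)⁻¹ = ∑ (ᾱθ)ᵏ` is a bounded `H²` function. Orthogonality to `θ_α H²`
means that `θ_α · conj W` has spectrum in `[1, ∞)`, and on `|θ| = 1` this function is
`-√(1 - |α|²) (1 - ᾱθ)⁻¹ · θ conj f`, whose spectrum is in `[1, ∞)` because `f ⊥ θH²`.
The isometry comes from `(1 - |α|²) |1 - ᾱθ|⁻² = 1 + 2 Re (ᾱθ / (1 - ᾱθ))` together with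
`f ⊥ θ f / (1 - ᾱθ)`. The Möbius map is an involution, so `(θ_α)_α = θ`, and the transform back
from `K_{θ_α}` to `K_θ` is multiplication by `(1 - ᾱθ) / √(1 - |α|²)`. Composing `p` with it
gives both claims about `p · g_α`.
-/

open ComplexConjugate

-- `SpectrumGE 0` describes `H²` and `SpectrumGE 1` describes `zH²`.
def SpectrumGE (a : ℤ) (f : Tc → ℂ) : Prop := ∀ n < a, fourierCoeff f n = 0

theorem SpectrumGE.congr_ae {a : ℤ} {f g : Tc → ℂ} (hf : SpectrumGE a f) (hfg : f =ᵐ[muc] g) :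
    SpectrumGE a g := fun n hn => by rw [← fourierCoeff_congr_ae hfg n]; exact hf n hn

theorem SpectrumGE.const_mul {a : ℤ} {f : Tc → ℂ} (hf : SpectrumGE a f) (c : ℂ) :
    SpectrumGE a (fun x => c * f x) := fun n hn => by
  rw [fourierCoeff.const_mul, hf n hn, mul_zero]

theorem spectrumGE_coe_hardy (f : Hd) : SpectrumGE 0 ((f : Ltwo) : Tc → ℂ) :=
  mem_Hardy_iff.mp f.2

theorem oneH_coe : ((oneH : Ltwo) : Tc → ℂ) =ᵐ[muc] fun _ => 1 := by
  filter_upwards [coeFn_fourierLp (T := 2 * Real.pi) 2 0] with x hx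
  exact hx.trans (fourier_zero (x := x))

theorem fourierLp_mem_Hardy {n : ℤ} (hn : 0 ≤ n) : fourierLp 2 n ∈ Hardy := by
  rw [mem_Hardy_iff]
  intro m hm
  rw [fourierCoeff_congr_ae (coeFn_fourierLp 2 n), fourierCoeff_fourier,
    Pi.single_eq_of_ne (by omega)]

theorem fourierCoeff_conj (f : Tc → ℂ) (n : ℤ) :
    fourierCoeff (fun x => conj (f x)) n = conj (fourierCoeff f (-n)) := by
  simp only [fourierCoeff, ← integral_conj, smul_eq_mul, map_mul, neg_neg, ← fourier_neg]

theorem inner_eq_tsum_fourierCoeff (F G : Ltwo) :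
    @inner ℂ Ltwo _ F G =
      ∑' m : ℤ, conj (fourierCoeff (F : Tc → ℂ) m) * fourierCoeff (G : Tc → ℂ) m := by
  rw [← fourierBasis.repr.inner_map_map F G, lp.inner_eq_tsum]
  congr 1 with m
  rw [fourierBasis_repr, fourierBasis_repr, RCLike.inner_apply, mul_comm]

theorem fourierCoeff_mul_eq_tsum {u f : Tc → ℂ} (hu : MemLp u 2 muc) (hf : MemLp f 2 muc)
    (n : ℤ) : fourierCoeff (fun x => u x * f x) n =
      ∑' m : ℤ, fourierCoeff u (n - m) * fourierCoeff f m := by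
  have hQ : MemLp (fun x => conj (fourier (-n) x * u x)) 2 muc :=
    hu.of_le (continuous_conj.comp_aestronglyMeasurable
      ((map_continuous _).aestronglyMeasurable.mul hu.1)) (Eventually.of_forall fun x => by
      rw [RCLike.norm_conj, norm_mul, fourier_abs, one_mul])
  have hQ_coeff (m : ℤ) : fourierCoeff (hQ.toLp : Tc → ℂ) m = conj (fourierCoeff u (n - m)) := by
    rw [fourierCoeff_congr_ae hQ.coeFn_toLp, fourierCoeff_conj, fourierCoeff_fourier_mul,
      neg_sub_neg]
  calc fourierCoeff (fun x => u x * f x) n = @inner ℂ Ltwo _ hQ.toLp hf.toLp := by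
        rw [L2.inner_def]
        refine integral_congr_ae ?_
        filter_upwards [hQ.coeFn_toLp, hf.coeFn_toLp] with x hQx hfx
        rw [RCLike.inner_apply, hQx, hfx, smul_eq_mul, map_mul, map_mul, starRingEnd_self_apply,
          starRingEnd_self_apply]
        ring
    _ = _ := by
        rw [inner_eq_tsum_fourierCoeff]
        congr 1 with m
        rw [hQ_coeff, starRingEnd_self_apply, fourierCoeff_congr_ae hf.coeFn_toLp]

theorem SpectrumGE.mul {a b : ℤ} {u f : Tc → ℂ} (hu : MemLp u 2 muc) (hf : MemLp f 2 muc)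
    (hua : SpectrumGE a u) (hfb : SpectrumGE b f) : SpectrumGE (a + b) (fun x => u x * f x) := by
  intro n hn
  rw [fourierCoeff_mul_eq_tsum hu hf]
  have hterm (m : ℤ) : fourierCoeff u (n - m) * fourierCoeff f m = 0 := by
    rcases lt_or_ge m b with hm | hm
    · rw [hfb m hm, mul_zero]
    · rw [hua _ (by omega), zero_mul]
  simp only [hterm, tsum_zero]

theorem fourierCoeff_zero_eq_integral (f : Tc → ℂ) : fourierCoeff f 0 = ∫ x, f x ∂muc := by
  simp only [fourierCoeff, neg_zero, fourier_zero, one_smul]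

theorem ipL_eq_conj_fourierCoeff_zero {θ : Hd} (h g : Ltwo) (F : Hd)
    (hg : (g : Tc → ℂ) =ᵐ[muc] fun x => ((θ : Ltwo) : Tc → ℂ) x * ((F : Ltwo) : Tc → ℂ) x) :
    ipL h g = conj (fourierCoeff
      (fun x => ((θ : Ltwo) : Tc → ℂ) x * conj ((h : Tc → ℂ) x) * ((F : Ltwo) : Tc → ℂ) x) 0) := by
  rw [ipL, L2.inner_def, fourierCoeff_zero_eq_integral, ← integral_conj]
  refine integral_congr_ae ?_
  filter_upwards [hg] with x hgx
  rw [RCLike.inner_apply, hgx, map_mul, map_mul, map_mul, starRingEnd_self_apply]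
  ring

theorem mem_KspaceL_iff {θ : Hd} (hθ : IsBddFn ((θ : Ltwo) : Tc → ℂ)) {h : Ltwo} :
    h ∈ KspaceL θ ↔
      h ∈ Hardy ∧ SpectrumGE 1 (fun x => ((θ : Ltwo) : Tc → ℂ) x * conj ((h : Tc → ℂ) x)) := by
  refine and_congr_right fun _ => ⟨fun horth m hm => ?_, fun hspec g ⟨F, hg⟩ => ?_⟩
  · obtain ⟨hθm, C, hC⟩ := hθ
    let F : Hd := ⟨fourierLp 2 (-m), fourierLp_mem_Hardy (by omega)⟩
    have hF : ((F : Ltwo) : Tc → ℂ) =ᵐ[muc] fourier (-m) := coeFn_fourierLp 2 (-m)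
    have hθF := memLp_mul_of_bounded hθm.aestronglyMeasurable hC (F : Ltwo)
    have h0 := horth _ ⟨F, hθF.coeFn_toLp⟩
    rw [ipL_eq_conj_fourierCoeff_zero h _ F hθF.coeFn_toLp, map_eq_zero] at h0
    rw [← h0, fourierCoeff_congr_ae (hF.mono fun x hx => by rw [hx, mul_comm]) 0,
      fourierCoeff_fourier_mul, zero_sub, neg_neg]
  · rw [ipL_eq_conj_fourierCoeff_zero h g F hg, map_eq_zero]
    exact hspec.mul (memLp_mul_conj hθ h) (Lp.memLp _) (spectrumGE_coe_hardy F) 0 one_pos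

theorem SpectrumGE.inv_one_sub {u : Tc → ℂ} (hu : AEStronglyMeasurable u muc) {r : ℝ}
    (hr : r < 1) (hur : ∀ᵐ x ∂muc, ‖u x‖ ≤ r) (hu0 : SpectrumGE 0 u) :
    SpectrumGE 0 (fun x => (1 - u x)⁻¹) := by
  set ρ := max r 0
  have hpow_le (k : ℕ) : ∀ᵐ x ∂muc, ‖u x ^ k‖ ≤ ρ ^ k := by
    filter_upwards [hur] with x hx
    rw [norm_pow]
    exact pow_le_pow_left₀ (norm_nonneg _) (hx.trans (le_max_left _ _)) k
  have hpow (k : ℕ) : SpectrumGE 0 (fun x => u x ^ k) := by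
    induction k with
    | zero => simpa using (spectrumGE_coe_hardy oneH).congr_ae oneH_coe
    | succ k ih =>
      simpa [pow_succ'] using
        hu0.mul (MemLp.of_bound hu r hur) (MemLp.of_bound (hu.pow k) _ (hpow_le k)) ih
  intro n hn
  set F : ℕ → Tc → ℂ := fun k x => fourier (-n) x * u x ^ k
  have hF_le (k : ℕ) : ∀ᵐ x ∂muc, ‖F k x‖ ≤ ρ ^ k := by
    filter_upwards [hpow_le k] with x hx
    rwa [norm_mul, fourier_abs, one_mul]
  have hF_int (k : ℕ) : Integrable (F k) muc :=
    .of_bound ((map_continuous _).aestronglyMeasurable.mul (hu.pow k)) _ (hF_le k)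
  have hF_sum : Summable fun k => ∫ x, ‖F k x‖ ∂muc := by
    refine .of_nonneg_of_le (fun k => integral_nonneg fun x => norm_nonneg _) (fun k => ?_)
      (summable_geometric_of_lt_one (le_max_right _ _) (max_lt hr one_pos))
    refine (le_abs_self _).trans ?_
    simpa using norm_integral_le_of_norm_le_const (μ := muc) (f := fun x => ‖F k x‖)
      (by simpa using hF_le k)
  calc fourierCoeff (fun x => (1 - u x)⁻¹) n = ∫ x, ∑' k, F k x ∂muc := by
        refine integral_congr_ae ?_
        filter_upwards [hur] with x hx
        rw [smul_eq_mul, tsum_mul_left, tsum_geometric_of_norm_lt_one (hx.trans_lt hr)]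
    _ = ∑' k, fourierCoeff (fun x => u x ^ k) n :=
        (integral_tsum_of_summable_integral_norm hF_int hF_sum).symm
    _ = 0 := by simp only [hpow _ n hn, tsum_zero]

section Mobius

variable {α z : ℂ}

theorem one_sub_conj_mul_ne_zero (hα : ‖α‖ < 1) (hz : ‖z‖ ≤ 1) : 1 - conj α * z ≠ 0 := by
  intro h
  have hlt : ‖conj α * z‖ < 1 := by
    rw [norm_mul, Complex.norm_conj]
    nlinarith [norm_nonneg α, norm_nonneg z]
  rw [← sub_eq_zero.mp h, norm_one] at hlt
  exact lt_irrefl _ hlt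

theorem norm_inv_one_sub_conj_mul_le (hα : ‖α‖ < 1) (hz : ‖z‖ ≤ 1) :
    ‖(1 - conj α * z)⁻¹‖ ≤ (1 - ‖α‖)⁻¹ := by
  rw [norm_inv]
  refine inv_anti₀ (by linarith) ?_
  have hαz : ‖conj α * z‖ ≤ ‖α‖ := by
    rw [norm_mul, Complex.norm_conj]
    exact mul_le_of_le_one_right (norm_nonneg α) hz
  linarith [norm_sub_norm_le (1 : ℂ) (conj α * z), norm_one (α := ℂ)]

theorem mul_conj_eq_one (hz : ‖z‖ = 1) : z * conj z = 1 := by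
  rw [Complex.mul_conj', hz]
  norm_num

theorem norm_mobius (hα : ‖α‖ < 1) (hz : ‖z‖ = 1) : ‖mobius α z‖ = 1 := by
  have hz' : (α - z) * conj z = -conj (1 - conj α * z) := by
    rw [map_sub, map_one, map_mul, starRingEnd_self_apply]
    linear_combination -mul_conj_eq_one hz
  have hnorm : ‖α - z‖ = ‖1 - conj α * z‖ := by
    calc ‖α - z‖ = ‖(α - z) * conj z‖ := by rw [norm_mul, Complex.norm_conj, hz, mul_one]
      _ = ‖1 - conj α * z‖ := by rw [hz', norm_neg, Complex.norm_conj]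
  rw [mobius, norm_div, hnorm, div_self (norm_ne_zero_iff.mpr (one_sub_conj_mul_ne_zero hα hz.le))]

theorem one_sub_conj_mul_mobius (hα : ‖α‖ < 1) (hz : ‖z‖ ≤ 1) :
    1 - conj α * mobius α z = (1 - α * conj α) / (1 - conj α * z) := by
  have hd := one_sub_conj_mul_ne_zero hα hz
  rw [mobius]
  field_simp
  ring

theorem mobius_mobius (hα : ‖α‖ < 1) (hz : ‖z‖ ≤ 1) : mobius α (mobius α z) = z := by
  have hd := one_sub_conj_mul_ne_zero hα hz
  have hc : 1 - α * conj α ≠ 0 := by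
    simpa only [mul_comm] using one_sub_conj_mul_ne_zero hα hα.le
  rw [mobius, one_sub_conj_mul_mobius hα hz, mobius, div_div_eq_mul_div, sub_mul,
    div_mul_cancel₀ _ hd, div_eq_iff hc]
  ring

theorem ofReal_sqrt_mul_self (hα : ‖α‖ ≤ 1) :
    (Real.sqrt (1 - ‖α‖ ^ 2) : ℂ) * (Real.sqrt (1 - ‖α‖ ^ 2) : ℂ) = 1 - α * conj α := by
  rw [← Complex.ofReal_mul, Real.mul_self_sqrt (by nlinarith [norm_nonneg α]), Complex.mul_conj']
  push_cast
  ring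

theorem ofReal_sqrt_ne_zero (hα : ‖α‖ < 1) : (Real.sqrt (1 - ‖α‖ ^ 2) : ℂ) ≠ 0 := by
  rw [Complex.ofReal_ne_zero, Real.sqrt_ne_zero']
  nlinarith [norm_nonneg α]

theorem sqrt_div_one_sub_conj_mul_mobius (hα : ‖α‖ < 1) (hz : ‖z‖ ≤ 1) :
    (Real.sqrt (1 - ‖α‖ ^ 2) : ℂ) / (1 - conj α * mobius α z) =
      (1 - conj α * z) / (Real.sqrt (1 - ‖α‖ ^ 2) : ℂ) := by
  have hs := ofReal_sqrt_ne_zero hα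
  have hd := one_sub_conj_mul_ne_zero hα hz
  rw [one_sub_conj_mul_mobius hα hz, ← ofReal_sqrt_mul_self hα.le]
  field_simp

theorem conj_one_sub_conj_mul (α z : ℂ) : conj (1 - conj α * z) = 1 - α * conj z := by
  rw [map_sub, map_one, map_mul, starRingEnd_self_apply]

theorem mobius_mul_conj_inv (hα : ‖α‖ < 1) (hz : ‖z‖ = 1) :
    mobius α z * conj (1 - conj α * z)⁻¹ = -z * (1 - conj α * z)⁻¹ := by
  have hd := one_sub_conj_mul_ne_zero hα hz.le
  have hdc : 1 - α * conj z ≠ 0 := by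
    rw [← conj_one_sub_conj_mul]
    exact (map_ne_zero _).mpr hd
  rw [mobius, map_inv₀, conj_one_sub_conj_mul, ← div_eq_mul_inv, ← div_eq_mul_inv, div_div,
    div_eq_div_iff (mul_ne_zero hd hdc) hd]
  linear_combination (-α * (1 - conj α * z)) * mul_conj_eq_one hz

theorem one_sub_mul_conj_mul_normSq_inv (hα : ‖α‖ < 1) (hz : ‖z‖ = 1) :
    (1 - α * conj α) * (conj (1 - conj α * z)⁻¹ * (1 - conj α * z)⁻¹) =
      1 + conj α * (z * (1 - conj α * z)⁻¹) + α * conj (z * (1 - conj α * z)⁻¹) := by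
  have hd := one_sub_conj_mul_ne_zero hα hz.le
  have hdc : 1 - α * conj z ≠ 0 := by
    rw [← conj_one_sub_conj_mul]
    exact (map_ne_zero _).mpr hd
  simp only [map_mul, map_inv₀, conj_one_sub_conj_mul]
  field_simp
  linear_combination (α * conj α) * mul_conj_eq_one hz

end Mobius

theorem IsBddFn.memLp {u : Tc → ℂ} (hu : IsBddFn u) : MemLp u 2 muc :=
  MemLp.of_bound hu.1.aestronglyMeasurable _ hu.2.choose_spec

theorem IsBddFn.memLp_mul {u : Tc → ℂ} (hu : IsBddFn u) (f : Ltwo) :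
    MemLp (fun x => u x * (f : Tc → ℂ) x) 2 muc :=
  memLp_mul_of_bounded hu.1.aestronglyMeasurable hu.2.choose_spec f

theorem exists_hardy_of_spectrumGE {φ : Tc → ℂ} (hφ : MemLp φ 2 muc) (h0 : SpectrumGE 0 φ) :
    ∃ g : Hd, ((g : Ltwo) : Tc → ℂ) =ᵐ[muc] φ :=
  ⟨⟨hφ.toLp, mem_Hardy_iff.mpr (h0.congr_ae hφ.coeFn_toLp.symm)⟩, hφ.coeFn_toLp⟩

section Inner

variable {θ : Hd} {α : ℂ}

theorem IsInnerFn.isBddFn (hθ : IsInnerFn θ) : IsBddFn ((θ : Ltwo) : Tc → ℂ) :=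
  ⟨(Lp.stronglyMeasurable _).measurable, 1, hθ.mono fun _ hx => hx.le⟩

theorem IsInnerFn.isBddFn_inv_one_sub_conj_mul (hθ : IsInnerFn θ) (hα : ‖α‖ < 1) :
    IsBddFn fun x => (1 - conj α * ((θ : Ltwo) : Tc → ℂ) x)⁻¹ :=
  ⟨by have := hθ.isBddFn.1; fun_prop, _,
    hθ.mono fun _ hx => norm_inv_one_sub_conj_mul_le hα hx.le⟩

theorem IsInnerFn.spectrumGE_inv_one_sub_conj_mul (hθ : IsInnerFn θ) (hα : ‖α‖ < 1) :
    SpectrumGE 0 fun x => (1 - conj α * ((θ : Ltwo) : Tc → ℂ) x)⁻¹ := by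
  refine SpectrumGE.inv_one_sub (by have := hθ.isBddFn.1; fun_prop) hα
    (hθ.mono fun x hx => ?_) ((spectrumGE_coe_hardy θ).const_mul _)
  rw [norm_mul, Complex.norm_conj, hx, mul_one]

theorem IsInnerFn.exists_hardy_eq_mobius (hθ : IsInnerFn θ) (hα : ‖α‖ < 1) :
    ∃ θα : Hd, ((θα : Ltwo) : Tc → ℂ) =ᵐ[muc] fun x => mobius α (((θ : Ltwo) : Tc → ℂ) x) := by
  have hv := hθ.isBddFn_inv_one_sub_conj_mul hα
  let g : Ltwo := α • (oneH : Ltwo) - θ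
  have hg : (g : Tc → ℂ) =ᵐ[muc] fun x => α - ((θ : Ltwo) : Tc → ℂ) x := by
    filter_upwards [Lp.coeFn_sub (α • (oneH : Ltwo)) θ, Lp.coeFn_smul α (oneH : Ltwo), oneH_coe]
      with x hsub hsmul hone
    rw [hsub, Pi.sub_apply, hsmul, Pi.smul_apply, hone, smul_eq_mul, mul_one]
  have hmob : (fun x => (1 - conj α * ((θ : Ltwo) : Tc → ℂ) x)⁻¹ * (g : Tc → ℂ) x)
      =ᵐ[muc] fun x => mobius α (((θ : Ltwo) : Tc → ℂ) x) := by
    filter_upwards [hg] with x hx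
    rw [hx, mobius, div_eq_inv_mul]
  refine exists_hardy_of_spectrumGE ((hv.memLp_mul g).ae_eq hmob) ?_
  have hg0 : SpectrumGE 0 (g : Tc → ℂ) :=
    mem_Hardy_iff.mp (Hardy.sub_mem (Hardy.smul_mem α oneH.2) θ.2)
  simpa using ((hθ.spectrumGE_inv_one_sub_conj_mul hα).mul hv.memLp (Lp.memLp _) hg0).congr_ae hmob

theorem IsInnerFn.of_ae_eq_mobius (hθ : IsInnerFn θ) (hα : ‖α‖ < 1) {θα : Hd}
    (hθα : ((θα : Ltwo) : Tc → ℂ) =ᵐ[muc] fun x => mobius α (((θ : Ltwo) : Tc → ℂ) x)) :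
    IsInnerFn θα := by
  filter_upwards [hθα, hθ] with x hx hθx
  rw [hx, norm_mobius hα hθx]

end Inner

theorem inner_self_eq_of_ae {W f E : Ltwo} (a b : ℂ)
    (h : ∀ᵐ x ∂muc, conj ((W : Tc → ℂ) x) * (W : Tc → ℂ) x =
      conj ((f : Tc → ℂ) x) * (f : Tc → ℂ) x + a * (conj ((f : Tc → ℂ) x) * (E : Tc → ℂ) x) +
        b * (conj ((E : Tc → ℂ) x) * (f : Tc → ℂ) x)) :
    @inner ℂ Ltwo _ W W =
      @inner ℂ Ltwo _ f f + a * @inner ℂ Ltwo _ f E + b * @inner ℂ Ltwo _ E f := by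
  have hint (F G : Ltwo) : Integrable (fun x => conj ((F : Tc → ℂ) x) * (G : Tc → ℂ) x) muc := by
    simpa only [RCLike.inner_apply'] using L2.integrable_inner (𝕜 := ℂ) F G
  simp only [L2.inner_def, RCLike.inner_apply']
  rw [integral_congr_ae h, integral_add ?_ ((hint E f).const_mul b),
    integral_add (hint f f) ((hint f E).const_mul a), integral_const_mul, integral_const_mul]
  exact (hint f f).add ((hint f E).const_mul a)

section Crofoot

variable {θ θα f W : Hd} {α : ℂ}

theorem crofoot_mem_KspaceL (hθ : IsInnerFn θ) (hα : ‖α‖ < 1)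
    (hθα : ((θα : Ltwo) : Tc → ℂ) =ᵐ[muc] fun x => mobius α (((θ : Ltwo) : Tc → ℂ) x))
    (hf : (f : Ltwo) ∈ KspaceL θ)
    (hW : ((W : Ltwo) : Tc → ℂ) =ᵐ[muc] fun x => (Real.sqrt (1 - ‖α‖ ^ 2) : ℂ) *
      ((1 - conj α * ((θ : Ltwo) : Tc → ℂ) x)⁻¹ * ((f : Ltwo) : Tc → ℂ) x)) :
    (W : Ltwo) ∈ KspaceL θα := by
  set s : ℂ := ((Real.sqrt (1 - ‖α‖ ^ 2) : ℝ) : ℂ)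
  have hv := hθ.isBddFn_inv_one_sub_conj_mul hα
  refine (mem_KspaceL_iff (hθ.of_ae_eq_mobius hα hθα).isBddFn).mpr ⟨W.2, ?_⟩
  have hprod : (fun x => -s * (1 - conj α * ((θ : Ltwo) : Tc → ℂ) x)⁻¹ *
      (((θ : Ltwo) : Tc → ℂ) x * conj (((f : Ltwo) : Tc → ℂ) x))) =ᵐ[muc]
      fun x => ((θα : Ltwo) : Tc → ℂ) x * conj (((W : Ltwo) : Tc → ℂ) x) := by
    filter_upwards [hθα, hW, hθ] with x hθαx hWx hθx
    rw [hθαx, hWx, map_mul, map_mul, Complex.conj_ofReal]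
    linear_combination (-s * conj (((f : Ltwo) : Tc → ℂ) x)) * mobius_mul_conj_inv hα hθx
  simpa using (((hθ.spectrumGE_inv_one_sub_conj_mul hα).const_mul (-s)).mul
    (hv.memLp.const_mul (-s)) (memLp_mul_conj hθ.isBddFn f)
    ((mem_KspaceL_iff hθ.isBddFn).mp hf).2).congr_ae hprod

theorem crofoot_norm_eq (hθ : IsInnerFn θ) (hα : ‖α‖ < 1) (hf : (f : Ltwo) ∈ KspaceL θ)
    (hW : ((W : Ltwo) : Tc → ℂ) =ᵐ[muc] fun x => (Real.sqrt (1 - ‖α‖ ^ 2) : ℂ) *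
      ((1 - conj α * ((θ : Ltwo) : Tc → ℂ) x)⁻¹ * ((f : Ltwo) : Tc → ℂ) x)) :
    ‖(W : Ltwo)‖ = ‖(f : Ltwo)‖ := by
  have hv := hθ.isBddFn_inv_one_sub_conj_mul hα
  obtain ⟨F, hF⟩ := exists_hardy_of_spectrumGE (hv.memLp_mul f) (by
    simpa using (hθ.spectrumGE_inv_one_sub_conj_mul hα).mul hv.memLp (Lp.memLp _)
      (spectrumGE_coe_hardy f))
  have hE := hθ.isBddFn.memLp_mul (F : Ltwo)
  have horth : @inner ℂ Ltwo _ hE.toLp f = 0 := hf.2 _ ⟨F, hE.coeFn_toLp⟩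
  have horth' : @inner ℂ Ltwo _ (f : Ltwo) hE.toLp = 0 := by
    rw [← inner_conj_symm, horth, map_zero]
  have hinner := inner_self_eq_of_ae (W := W) (f := f) (E := hE.toLp) (conj α) α (by
    filter_upwards [hW, hE.coeFn_toLp, hF, hθ] with x hWx hEx hFx hθx
    have key := one_sub_mul_conj_mul_normSq_inv hα hθx
    rw [hWx, hEx, hFx]
    simp only [map_mul, Complex.conj_ofReal] at key ⊢
    linear_combination
      (conj (((f : Ltwo) : Tc → ℂ) x) * ((f : Ltwo) : Tc → ℂ) x) * key +
      (conj (1 - conj α * ((θ : Ltwo) : Tc → ℂ) x)⁻¹ * (1 - conj α * ((θ : Ltwo) : Tc → ℂ) x)⁻¹ *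
        conj (((f : Ltwo) : Tc → ℂ) x) * ((f : Ltwo) : Tc → ℂ) x) * ofReal_sqrt_mul_self hα.le)
  rw [horth, horth', mul_zero, mul_zero, add_zero, add_zero, inner_self_eq_norm_sq_to_K,
    inner_self_eq_norm_sq_to_K] at hinner
  exact (pow_left_inj₀ (norm_nonneg _) (norm_nonneg _) two_ne_zero).mp (by exact_mod_cast hinner)

end Crofoot

def IsIsomMultInto (w : Tc → ℂ) (θ θ' : Hd) : Prop :=
  ∀ h ∈ Kspace θ, ∃ g ∈ Kspace θ',
    ((g : Ltwo) : Tc → ℂ) =ᵐ[muc] (fun x => w x * ((h : Ltwo) : Tc → ℂ) x) ∧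
      ‖(g : Ltwo)‖ = ‖(h : Ltwo)‖

section IsIsomMultInto

variable {p v w w' : Tc → ℂ} {θ θ' : Hd}

theorem IsIsomMultInto.congr_ae (hw : IsIsomMultInto w θ θ') (hww' : w =ᵐ[muc] w') :
    IsIsomMultInto w' θ θ' := by
  intro h hh
  obtain ⟨g, hg, hgw, hgh⟩ := hw h hh
  refine ⟨g, hg, hgw.trans ?_, hgh⟩
  filter_upwards [hww'] with x hx
  rw [hx]

theorem IsIsomMult.mul_of_isIsomMultInto (hp : IsIsomMult p θ) (hw : IsIsomMultInto w θ' θ)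
    (hwm : Measurable w) : IsIsomMult (fun x => p x * w x) θ' := by
  refine ⟨hp.1.mul hwm, fun h hh => ?_⟩
  obtain ⟨g, hg, hgw, hgh⟩ := hw h hh
  obtain ⟨k, hkp, hkg⟩ := hp.2 g hg
  refine ⟨k, ?_, hkg.trans hgh⟩
  filter_upwards [hkp, hgw] with x hkx hgx
  rw [hkx, hgx, mul_assoc]

theorem wModel_eq_of_isIsomMultInto (hv : IsIsomMultInto v θ θ') (hw : IsIsomMultInto w θ' θ)
    (hwv : ∀ᵐ x ∂muc, w x * v x = 1) : wModel p θ = wModel (fun x => p x * w x) θ' := by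
  ext g
  constructor
  · rintro ⟨h, hh, hgh⟩
    obtain ⟨h', hh', hh'h, -⟩ := hv h hh
    refine ⟨h', hh', ?_⟩
    filter_upwards [hgh, hh'h, hwv] with x hgx hx hwvx
    rw [hgx, hx, mul_assoc, ← mul_assoc (w x), hwvx, one_mul]
  · rintro ⟨h', hh', hgh'⟩
    obtain ⟨h, hh, hhh', -⟩ := hw h' hh'
    refine ⟨h, hh, ?_⟩
    filter_upwards [hgh', hhh'] with x hgx hx
    rw [hgx, hx, mul_assoc]

end IsIsomMultInto

theorem IsInnerFn.isIsomMultInto_crofoot {θ θα : Hd} (hθ : IsInnerFn θ) {α : ℂ} (hα : ‖α‖ < 1)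
    (hθα : ((θα : Ltwo) : Tc → ℂ) =ᵐ[muc] fun x => mobius α (((θ : Ltwo) : Tc → ℂ) x)) :
    IsIsomMultInto (fun x => (Real.sqrt (1 - ‖α‖ ^ 2) : ℂ) /
      (1 - conj α * ((θ : Ltwo) : Tc → ℂ) x)) θ θα := by
  intro f hf
  have hv := hθ.isBddFn_inv_one_sub_conj_mul hα
  set s : ℂ := ((Real.sqrt (1 - ‖α‖ ^ 2) : ℝ) : ℂ)
  obtain ⟨W, hW⟩ := exists_hardy_of_spectrumGE ((hv.memLp_mul f).const_mul s) (by
    simpa using ((hθ.spectrumGE_inv_one_sub_conj_mul hα).mul hv.memLp (Lp.memLp _)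
      (spectrumGE_coe_hardy f)).const_mul s)
  refine ⟨W, crofoot_mem_KspaceL hθ hα hθα hf hW, ?_, crofoot_norm_eq hθ hα hf hW⟩
  filter_upwards [hW] with x hx
  rw [hx, div_eq_mul_inv, mul_assoc]

/-- Frostman shift of a weighted model space: `pK_θ = (p·g_α)K_{θ_α}`. -/
theorem frostman_shift (θ : Hd) (hθ : IsInnerFn θ)
    (p : Tc → ℂ) (hp : IsIsomMult p θ)
    (α : ℂ) (hα : ‖α‖ < 1) :
    ∃ θα : Hd,
      (((θα : Ltwo) : Tc → ℂ) =ᵐ[muc]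
        fun x => (α - ((θ : Ltwo) : Tc → ℂ) x) /
          (1 - (starRingEnd ℂ) α * ((θ : Ltwo) : Tc → ℂ) x)) ∧
      IsInnerFn θα ∧
      IsIsomMult (fun x => p x * ((1 - (starRingEnd ℂ) α * ((θ : Ltwo) : Tc → ℂ) x) /
        (Real.sqrt (1 - ‖α‖ ^ 2) : ℂ))) θα ∧
      wModel p θ = wModel (fun x => p x *
        ((1 - (starRingEnd ℂ) α * ((θ : Ltwo) : Tc → ℂ) x) /
          (Real.sqrt (1 - ‖α‖ ^ 2) : ℂ))) θα := by
  obtain ⟨θα, hθα⟩ := hθ.exists_hardy_eq_mobius hα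
  have hθαi := hθ.of_ae_eq_mobius hα hθα
  have hθ_eq : ((θ : Ltwo) : Tc → ℂ) =ᵐ[muc] fun x => mobius α (((θα : Ltwo) : Tc → ℂ) x) := by
    filter_upwards [hθα, hθ] with x hx hθx
    rw [hx, mobius_mobius hα hθx.le]
  have hback : IsIsomMultInto (fun x => (1 - conj α * ((θ : Ltwo) : Tc → ℂ) x) /
      (Real.sqrt (1 - ‖α‖ ^ 2) : ℂ)) θα θ := by
    refine (hθαi.isIsomMultInto_crofoot hα hθ_eq).congr_ae ?_
    filter_upwards [hθα, hθ] with x hx hθx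
    rw [hx, sqrt_div_one_sub_conj_mul_mobius hα hθx.le]
  refine ⟨θα, hθα, hθαi, hp.mul_of_isIsomMultInto hback ?_,
    wModel_eq_of_isIsomMultInto (hθ.isIsomMultInto_crofoot hα hθα) hback ?_⟩
  · have := hθ.isBddFn.1
    fun_prop
  · filter_upwards [hθ] with x hθx
    have := one_sub_conj_mul_ne_zero hα hθx.le
    have := ofReal_sqrt_ne_zero hα
    field_simp

end HankelSchmidt
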